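/- arXiv:1912.02731 — 3 statements merged into one kernel-verified Lean document; each statement's English description precedes it below -/
import Mathlib

section
/- Fix a type β, an element x₀ : β, and define the doubling fold dbl : List γ → List β by dbl u = List.foldr (fun _ acc => acc ++ acc) [x₀] u. Let n ≥ 0 and let s be any list of length n. Define ε : ℕ → List β by ε 1 = dbl s and ε (k+1) = dbl (ε k). Then for every k ≥ 1, the list ε k has length exp k n. -/
/-- The tower function: `texp 1 n = 2^n` and `texp (k+1) n = 2^(texp k n)`. -/
def texp : ℕ → ℕ → ℕ
  | 0, n => n
  | k + 1, n => 2 ^ texp k n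

/-- The doubling fold: `dbl x₀ u = List.foldr (fun _ acc => acc ++ acc) [x₀] u`. -/
def dbl {β γ : Type*} (x₀ : β) (u : List γ) : List β :=
  List.foldr (fun _ acc => acc ++ acc) [x₀] u

lemma dbl_length {β γ : Type*} (x₀ : β) (u : List γ) :
    (dbl x₀ u).length = 2 ^ u.length := by
  induction u with
  | nil => simp [dbl]
  | cons a t ih =>
    simp only [dbl, List.foldr_cons, List.length_append, List.length_cons, pow_succ]
    simp only [dbl] at ih
    omega

/-- If `ε 1 = dbl s` for a list `s` of length `n` and `ε (k+1) = dbl (ε k)`,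
then for every `k ≥ 1` the list `ε k` has length `texp k n`
(the interpretation of the recursive term `ε_k` is an `exp k n`-list). -/
theorem eps_length {β γ : Type*} (x₀ : β) (n : ℕ) (s : List γ)
    (hs : s.length = n) (ε : ℕ → List β)
    (hε1 : ε 1 = dbl x₀ s)
    (hεsucc : ∀ k, 1 ≤ k → ε (k + 1) = dbl x₀ (ε k)) :
    ∀ k, 1 ≤ k → (ε k).length = texp k n := by
  intro k hk
  induction k with
  | zero => omega
  | succ m ih =>
    rcases Nat.eq_or_lt_of_le hk with h | h
    · obtain rfl : m = 0 := by omega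
      rw [hε1, dbl_length, hs]
      simp [texp]
    · have hm : 1 ≤ m := by omega
      rw [hεsucc m hm, dbl_length, ih hm]
      simp [texp]
end

section
/- For any regular-like expressions E₁, E₂ over a finite alphabet Σ (with all exponents m ≥ 1): L(E₁) ≠ L(E₂) if and only if there exists a word w such that (w ∈ list(E₁) and w ∉ list(E₂)) or (w ∈ list(E₂) and w ∉ list(E₁)). -/
/-- Cartesian concatenation of two lists of words:
`×[s₁, s₂]` is the list of all concatenations `a ++ b` with `a ∈ s₁`, `b ∈ s₂`. -/
def cartConc {Alph : Type*} (s₁ s₂ : List (List Alph)) : List (List Alph) :=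
  (s₁ ×ˢ s₂).map (fun p => p.1 ++ p.2)

/-- Cartesian power of a list of words: `s^1 = s` and `s^(k+1) = ×[s^k, s]`
(the value at `0` is a junk value; only `k ≥ 1` matters). -/
def cartPow {Alph : Type*} (s : List (List Alph)) : ℕ → List (List Alph)
  | 0 => s
  | 1 => s
  | k + 2 => cartConc (cartPow s (k + 1)) s

/-- Regular-like expressions (without Kleene star, with exponentiation `m ≥ 1`)
over an alphabet: `E ::= a | E₁ ∪ E₂ | E₁ · E₂ | E^m` (`m ≥ 1`). -/
inductive RegLike (Alph : Type*) where
  | ch : Alph → RegLike Alph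
  | union : RegLike Alph → RegLike Alph → RegLike Alph
  | concat : RegLike Alph → RegLike Alph → RegLike Alph
  | pow : RegLike Alph → ℕ+ → RegLike Alph

/-- The language of a regular-like expression: `L(a) = {[a]}`,
`L(E₁ ∪ E₂) = L(E₁) ∪ L(E₂)`, `L(E₁ · E₂) = L(E₁) * L(E₂)`,
`L(E^m) = L(E)^m`. -/
def RegLike.lang {Alph : Type*} : RegLike Alph → Language Alph
  | .ch a => {[a]}
  | .union E₁ E₂ => E₁.lang + E₂.lang   -- `+` on `Language` is set union
  | .concat E₁ E₂ => E₁.lang * E₂.lang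
  | .pow E m => E.lang ^ (m : ℕ)

/-- The list encoding of a regular-like expression: `list(a) = [[a]]`,
`list(E₁ ∪ E₂) = list(E₁) ++ list(E₂)`, `list(E₁ · E₂) = ×[list(E₁), list(E₂)]`,
`list(E^m) = (list(E))^m`. -/
def RegLike.listOf {Alph : Type*} : RegLike Alph → List (List Alph)
  | .ch a => [[a]]
  | .union E₁ E₂ => E₁.listOf ++ E₂.listOf
  | .concat E₁ E₂ => cartConc E₁.listOf E₂.listOf
  | .pow E m => cartPow E.listOf (m : ℕ)



theorem mem_cartConc {Alph : Type*} {s₁ s₂ : List (List Alph)} {w : List Alph} :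
    w ∈ cartConc s₁ s₂ ↔ ∃ a ∈ s₁, ∃ b ∈ s₂, a ++ b = w := by
  simp [cartConc, List.mem_map, List.mem_product, Prod.exists]
  aesop

theorem mem_cartPow {Alph : Type*} (s : List (List Alph)) (L : Language Alph)
    (h : ∀ w, w ∈ s ↔ w ∈ L) (k : ℕ) (hk : 1 ≤ k) :
    ∀ w, w ∈ cartPow s k ↔ w ∈ L ^ k := by
  induction k with
  | zero => omega
  | succ k ih =>
    rcases Nat.eq_or_lt_of_le hk with h1 | h1
    · simpa [cartPow, ← h1] using h
    · intro w
      have hk' : 1 ≤ k := by omega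
      obtain ⟨k', rfl⟩ : ∃ k', k = k' + 1 := ⟨k - 1, by omega⟩
      rw [show cartPow s (k'+1+1) = cartConc (cartPow s (k'+1)) s from rfl,
        mem_cartConc, pow_succ, Language.mem_mul]
      constructor
      · rintro ⟨a, ha, b, hb, rfl⟩
        exact ⟨a, (ih hk' a).1 ha, b, (h b).1 hb, rfl⟩
      · rintro ⟨a, ha, b, hb, rfl⟩
        exact ⟨a, (ih hk' a).2 ha, b, (h b).2 hb, rfl⟩

theorem RegLike.mem_listOf_iff {Alph : Type*} (E : RegLike Alph) (w : List Alph) :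
    w ∈ E.listOf ↔ w ∈ E.lang := by
  induction E generalizing w with
  | ch a =>
    simp only [RegLike.listOf, RegLike.lang, List.mem_singleton]
    exact Set.mem_singleton_iff.symm
  | union E₁ E₂ ih₁ ih₂ =>
    simp only [RegLike.listOf, RegLike.lang, List.mem_append, ih₁, ih₂]
    rfl
  | concat E₁ E₂ ih₁ ih₂ =>
    simp only [RegLike.listOf, RegLike.lang, mem_cartConc, Language.mem_mul]
    constructor
    · rintro ⟨a, ha, b, hb, rfl⟩; exact ⟨a, (ih₁ a).1 ha, b, (ih₂ b).1 hb, rfl⟩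
    · rintro ⟨a, ha, b, hb, rfl⟩; exact ⟨a, (ih₁ a).2 ha, b, (ih₂ b).2 hb, rfl⟩
  | pow E m ih =>
    exact mem_cartPow E.listOf E.lang ih (m : ℕ) m.one_le w

/-- `L(E₁) ≠ L(E₂)` iff there is a word `w` in one of the lists `list(E₁)`,
`list(E₂)` but not in the other (the final step of the reduction of the
inequality problem for regular-like expressions to model checking). -/
theorem RegLike.lang_ne_iff {Alph : Type*} [Fintype Alph] (E₁ E₂ : RegLike Alph) :
    E₁.lang ≠ E₂.lang ↔
      ∃ w : List Alph,
        (w ∈ E₁.listOf ∧ w ∉ E₂.listOf) ∨ (w ∈ E₂.listOf ∧ w ∉ E₁.listOf) := by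
  constructor
  · intro hne
    by_contra hno
    push_neg at hno
    apply hne
    ext w
    rw [← E₁.mem_listOf_iff, ← E₂.mem_listOf_iff]
    have := hno w
    tauto
  · rintro ⟨w, hw⟩ heq
    rw [E₁.mem_listOf_iff, E₂.mem_listOf_iff, heq] at hw
    tauto
end

section
/- Let L be a first-order language, α a type of variables, f : L.Term α a term, and h : L.Term (α ⊕ Fin 1) a term with one distinguished hole variable. Define g : ℕ → L.Term α by g 0 = f and g (j+1) = the substitution of h sending each variable Sum.inl v to the variable term for v and the hole Sum.inr 0 to g j. Then for every i : ℕ, |g i| ≤ |f| * |h|^i. -/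
open FirstOrder

/-- The size of a first-order term: the total number of nodes, i.e. the number
of variable occurrences plus the number of function-symbol applications. -/
def termSize {L : FirstOrder.Language} {α : Type*} : L.Term α → ℕ
  | .var _ => 1
  | .func _f ts => 1 + Finset.univ.sum fun i => termSize (ts i)

lemma termSize_pos {L : FirstOrder.Language} {α : Type*} (t : L.Term α) :
    1 ≤ termSize t := by
  cases t <;> simp [termSize]

lemma termSize_subst_le {L : FirstOrder.Language} {α β : Type*}
    (t : L.Term α) (σ : α → L.Term β) (M : ℕ) (hM : 1 ≤ M)
    (hσ : ∀ v, termSize (σ v) ≤ M) :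
    termSize (t.subst σ) ≤ termSize t * M := by
  induction t with
  | var v => simpa [termSize, Language.Term.subst] using hσ v
  | func F ts ih =>
      simp only [Language.Term.subst, termSize]
      calc 1 + ∑ i, termSize ((ts i).subst σ)
          ≤ 1 + ∑ i, termSize (ts i) * M := by
            gcongr with i; exact ih i
        _ ≤ (1 + ∑ i, termSize (ts i)) * M := by
            rw [add_mul, Finset.sum_mul]
            have := hM; omega

/-- Unfolding an iterative term: if `g 0 = f` and `g (j+1)` is obtained by
substituting `g j` for the hole variable of `h` (and keeping all other variables),
then `|g i| ≤ |f| * |h|^i`. -/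
theorem iter_unfold_size {L : FirstOrder.Language} {α : Type*}
    (f : L.Term α) (h : L.Term (α ⊕ Fin 1)) (g : ℕ → L.Term α)
    (hg0 : g 0 = f)
    (hgs : ∀ j : ℕ, g (j + 1) =
      h.subst (Sum.elim FirstOrder.Language.Term.var (fun _ => g j))) :
    ∀ i : ℕ, termSize (g i) ≤ termSize f * (termSize h) ^ i := by
  intro i
  induction i with
  | zero => simp [hg0]
  | succ j ih =>
      rw [hgs j, pow_succ, ← mul_assoc, mul_comm (termSize f * termSize h ^ j)]
      refine termSize_subst_le _ _ _ ?_ ?_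
      · exact Nat.mul_le_mul (termSize_pos f) (Nat.one_le_pow _ _ (termSize_pos h))
      · rintro (v | k)
        · simpa [termSize] using
            Nat.mul_le_mul (termSize_pos f) (Nat.one_le_pow _ _ (termSize_pos h))
        · exact ih
end
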